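/- arXiv:2103.06324 — 3 statements merged into one kernel-verified Lean document; each statement's English description precedes it below -/
import Mathlib

section
/- Let D be an N×N diagonal matrix with diagonal entries in [0,1], with 1ᵀ(I-D)1 > 0, where 1 is the all-ones vector. Then the matrix M = D + (I-D)1 1ᵀ(I-D) / (1ᵀ(I-D)1) satisfies M ≼ I. -/
/-- Let `D` be an `N×N` diagonal matrix with diagonal entries in `[0,1]` and
`1ᵀ(I-D)1 > 0`.  Then `M = D + (I-D)1 1ᵀ(I-D)/(1ᵀ(I-D)1)` satisfies `M ≼ I`. -/
theorem stmt_4 (N : ℕ) (d : Fin N → ℝ) (hd : ∀ i, d i ∈ Set.Icc (0 : ℝ) 1)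
    (hpos : 0 < ∑ i, (1 - d i))
    (M : Matrix (Fin N) (Fin N) ℝ)
    (hM : M = Matrix.diagonal d +
      (∑ i, (1 - d i))⁻¹ • Matrix.vecMulVec (fun i => 1 - d i) (fun i => 1 - d i)) :
    ((1 : Matrix (Fin N) (Fin N) ℝ) - M).PosSemidef := by
  set s : ℝ := ∑ i, (1 - d i) with hs
  rw [Matrix.posSemidef_iff_dotProduct_mulVec]
  constructor
  · unfold Matrix.IsHermitian
    ext i j
    simp only [hM, Matrix.conjTranspose_apply, Matrix.sub_apply, Matrix.add_apply,
      Matrix.smul_apply, Matrix.one_apply, Matrix.diagonal_apply,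
      Matrix.vecMulVec_apply, star_trivial, smul_eq_mul]
    by_cases h : i = j
    · subst h; ring
    · simp only [h, Ne.symm h, if_false]
      ring
  · intro x
    have key : ∀ i, (∑ j, ((1 : ℝ) - d i) * (1 - d j) * x j)
        = (1 - d i) * ∑ j, (1 - d j) * x j := by
      intro i
      rw [Finset.mul_sum]
      exact Finset.sum_congr rfl fun j _ => by ring
    have hexp : dotProduct (star x)
          (Matrix.mulVec ((1 : Matrix (Fin N) (Fin N) ℝ) - M) x)
        = (∑ i, (1 - d i) * x i ^ 2) - s⁻¹ * (∑ i, (1 - d i) * x i) ^ 2 := by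
      simp only [hM, Matrix.sub_mulVec, Matrix.add_mulVec, Matrix.one_mulVec,
        Matrix.smul_mulVec]
      simp only [dotProduct, star_trivial, Pi.sub_apply, Pi.add_apply,
        Pi.smul_apply, smul_eq_mul, Matrix.mulVec_diagonal, Matrix.mulVec,
        dotProduct, Matrix.vecMulVec_apply]
      have hsq : (∑ i, ((1 : ℝ) - d i) * x i) ^ 2
          = ∑ i, ((1 - d i) * x i) * ∑ j, (1 - d j) * x j := by
        rw [sq, Finset.sum_mul]
      rw [hsq, Finset.mul_sum, ← Finset.sum_sub_distrib]
      refine Finset.sum_congr rfl fun i _ => ?_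
      rw [key i]
      simp only [Matrix.diagonal_apply, ite_mul, zero_mul, Finset.sum_ite_eq,
        Finset.mem_univ, if_true]
      ring
    rw [hexp, sub_nonneg]
    have hvnn : ∀ i, (0:ℝ) ≤ 1 - d i := fun i => by
      have := (hd i).2; linarith
    have hcs : (∑ i, (1 - d i) * x i) ^ 2 ≤ s * ∑ i, (1 - d i) * x i ^ 2 :=
      Finset.sum_sq_le_sum_mul_sum_of_sq_eq_mul Finset.univ
        (fun i _ => hvnn i) (fun i _ => mul_nonneg (hvnn i) (sq_nonneg _))
        (fun i _ => by ring)
    calc s⁻¹ * (∑ i, (1 - d i) * x i) ^ 2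
        ≤ s⁻¹ * (s * ∑ i, (1 - d i) * x i ^ 2) :=
          mul_le_mul_of_nonneg_left hcs (inv_nonneg.mpr hpos.le)
      _ = ∑ i, (1 - d i) * x i ^ 2 := by field_simp
end

section
/- Let A(x) be a positive definite symmetric matrix depending differentiably on a real scalar x, and let A^{1/2}(x) be its unique positive definite square root. Then the largest eigenvalue of (dA^{1/2}/dx)² is at most λ_max((dA/dx)²) / (4 λ_min(A)). -/
open Matrix

section Aux

open scoped RealInnerProductSpace

variable {n : ℕ}

private lemma toEuclideanLin_mul_apply (P Q : Matrix (Fin n) (Fin n) ℝ)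
    (v : EuclideanSpace ℝ (Fin n)) :
    toEuclideanLin (P * Q) v = toEuclideanLin P (toEuclideanLin Q v) := by
  simp [toEuclideanLin_apply, mulVec_mulVec]

private lemma exists_eigvec_of_mem_spectrum {M : Matrix (Fin n) (Fin n) ℝ} {t : ℝ}
    (h : t ∈ spectrum ℝ M) :
    ∃ w : EuclideanSpace ℝ (Fin n), w ≠ 0 ∧ toEuclideanLin M w = t • w := by
  rw [← Matrix.spectrum_toEuclideanLin (A := M),
    ← Module.End.hasEigenvalue_iff_mem_spectrum] at h
  obtain ⟨w, hw⟩ := h.exists_hasEigenvector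
  exact ⟨w, hw.2, hw.apply_eq_smul⟩

private lemma mem_spectrum_of_eigvec {M : Matrix (Fin n) (Fin n) ℝ} {t : ℝ}
    {w : EuclideanSpace ℝ (Fin n)} (hw : w ≠ 0) (h : toEuclideanLin M w = t • w) :
    t ∈ spectrum ℝ M := by
  rw [← Matrix.spectrum_toEuclideanLin (A := M),
    ← Module.End.hasEigenvalue_iff_mem_spectrum]
  exact Module.End.hasEigenvalue_of_hasEigenvector
    ⟨Module.End.mem_eigenspace_iff.2 h, hw⟩

private lemma quad_form_eq {M : Matrix (Fin n) (Fin n) ℝ} (hM : M.IsHermitian)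
    (u : EuclideanSpace ℝ (Fin n)) :
    ⟪u, toEuclideanLin M u⟫ = ∑ i, hM.eigenvalues i * ⟪u, hM.eigenvectorBasis i⟫ ^ 2 := by
  set b := hM.eigenvectorBasis with hb
  have hbe : ∀ i, toEuclideanLin M (b i) = hM.eigenvalues i • b i := by
    intro i
    have h1 := hM.mulVec_eigenvectorBasis i
    apply (WithLp.equiv 2 (Fin n → ℝ)).injective
    simpa using h1
  rw [← b.sum_inner_mul_inner u (toEuclideanLin M u)]
  refine Finset.sum_congr rfl fun i _ => ?_
  have hsym := (isHermitian_iff_isSymmetric.1 hM)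
  have : ⟪b i, toEuclideanLin M u⟫ = hM.eigenvalues i * ⟪b i, u⟫ := by
    rw [← hsym (b i) u, hbe i, real_inner_smul_left]
  rw [this, real_inner_comm (b i) u]
  ring

private lemma sum_inner_sq_eq_one {M : Matrix (Fin n) (Fin n) ℝ} (hM : M.IsHermitian)
    {u : EuclideanSpace ℝ (Fin n)} (hu : ‖u‖ = 1) :
    ∑ i, ⟪u, hM.eigenvectorBasis i⟫ ^ 2 = 1 := by
  have h := hM.eigenvectorBasis.sum_inner_mul_inner u u
  have h2 : ⟪u, u⟫ = 1 := by
    rw [real_inner_self_eq_norm_sq, hu]; norm_num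
  rw [h2] at h
  rw [← h]
  refine Finset.sum_congr rfl fun i _ => ?_
  rw [real_inner_comm (hM.eigenvectorBasis i) u]
  ring

private lemma rayleigh_le_sSup {M : Matrix (Fin n) (Fin n) ℝ} (hM : M.IsHermitian)
    {u : EuclideanSpace ℝ (Fin n)} (hu : ‖u‖ = 1) :
    ⟪u, toEuclideanLin M u⟫ ≤ sSup (spectrum ℝ M) := by
  have hbdd : BddAbove (spectrum ℝ M) := (Matrix.finite_real_spectrum (A := M)).bddAbove
  rw [quad_form_eq hM u]
  calc ∑ i, hM.eigenvalues i * ⟪u, hM.eigenvectorBasis i⟫ ^ 2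
      ≤ ∑ i, sSup (spectrum ℝ M) * ⟪u, hM.eigenvectorBasis i⟫ ^ 2 := by
        refine Finset.sum_le_sum fun i _ => ?_
        exact mul_le_mul_of_nonneg_right
          (le_csSup hbdd (hM.eigenvalues_mem_spectrum_real i)) (sq_nonneg _)
    _ = sSup (spectrum ℝ M) := by
        rw [← Finset.mul_sum, sum_inner_sq_eq_one hM hu, mul_one]

private lemma sInf_le_rayleigh {M : Matrix (Fin n) (Fin n) ℝ} (hM : M.IsHermitian)
    {u : EuclideanSpace ℝ (Fin n)} (hu : ‖u‖ = 1) :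
    sInf (spectrum ℝ M) ≤ ⟪u, toEuclideanLin M u⟫ := by
  have hbdd : BddBelow (spectrum ℝ M) := (Matrix.finite_real_spectrum (A := M)).bddBelow
  rw [quad_form_eq hM u]
  calc sInf (spectrum ℝ M)
      = ∑ i, sInf (spectrum ℝ M) * ⟪u, hM.eigenvectorBasis i⟫ ^ 2 := by
        rw [← Finset.mul_sum, sum_inner_sq_eq_one hM hu, mul_one]
    _ ≤ ∑ i, hM.eigenvalues i * ⟪u, hM.eigenvectorBasis i⟫ ^ 2 := by
        refine Finset.sum_le_sum fun i _ => ?_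
        exact mul_le_mul_of_nonneg_right
          (csInf_le hbdd (hM.eigenvalues_mem_spectrum_real i)) (sq_nonneg _)

end Aux

open scoped RealInnerProductSpace in
/-- Let `A x` be a positive definite symmetric matrix depending differentiably on a
real scalar `x`, with unique positive definite square root `S x` (`S x * S x = A x`),
also differentiable.  Then the largest eigenvalue of `(dS/dx)²` is at most
`λ_max((dA/dx)²) / (4 λ_min(A))`.  (Here `λ_max M = sSup (spectrum ℝ M)` and
`λ_min M = sInf (spectrum ℝ M)`.) -/
theorem stmt_5 (n : ℕ) (A S A' S' : ℝ → Matrix (Fin n) (Fin n) ℝ)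
    (hA : ∀ x, (A x).PosDef) (hS : ∀ x, (S x).PosDef)
    (hsq : ∀ x, S x * S x = A x)
    (hdA : ∀ x i j, HasDerivAt (fun t => A t i j) (A' x i j) x)
    (hdS : ∀ x i j, HasDerivAt (fun t => S t i j) (S' x i j) x)
    (x : ℝ) :
    sSup (spectrum ℝ (S' x * S' x)) ≤
      sSup (spectrum ℝ (A' x * A' x)) / (4 * sInf (spectrum ℝ (A x))) := by
  classical
  rcases Nat.eq_zero_or_pos n with hn | hn
  · subst hn
    have hempty : ∀ M : Matrix (Fin 0) (Fin 0) ℝ, spectrum ℝ M = ∅ := by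
      intro M
      ext z
      simp only [spectrum.mem_iff, Set.mem_empty_iff_false, iff_false, not_not]
      exact isUnit_of_subsingleton _
    simp [hempty, Real.sSup_empty]
  have hne : Nonempty (Fin n) := ⟨⟨0, hn⟩⟩
  -- basic symmetry facts
  have hss : (S x).IsHermitian := (hS x).1
  have hAh : (A x).IsHermitian := (hA x).1
  have hsm : (S' x).IsHermitian := by
    show (S' x)ᴴ = S' x
    ext i j
    rw [conjTranspose_apply, star_trivial]
    have h2 : (fun t => S t j i) = fun t => S t i j := by
      funext t
      have := (hS t).1.apply i j
      rwa [star_trivial] at this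
    exact (hdS x j i).unique (h2 ▸ hdS x i j)
  -- the derivative identity A' = S' S + S S'
  have ha : A' x = S' x * S x + S x * S' x := by
    ext i j
    refine (hdA x i j).unique ?_
    have heq : (fun t => A t i j) = fun t => ∑ k, S t i k * S t k j := by
      funext t; rw [← hsq t, mul_apply]
    have h2 : HasDerivAt (fun t => ∑ k, S t i k * S t k j)
        (∑ k, (S' x i k * S x k j + S x i k * S' x k j)) x :=
      HasDerivAt.fun_sum fun k _ => (hdS x i k).mul (hdS x k j)
    rw [heq]
    convert h2 using 1
    · rfl
    · rfl
    simp [Matrix.add_apply, mul_apply, Finset.sum_add_distrib]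
  have ham : (A' x).IsHermitian := by
    show (A' x)ᴴ = A' x
    rw [ha, conjTranspose_add, conjTranspose_mul, conjTranspose_mul, hsm, hss, add_comm]
  have haa : (A' x * A' x).IsHermitian := by
    show _ᴴ = _
    rw [conjTranspose_mul, ham]
  have hmm : (S' x * S' x).IsHermitian := by
    show _ᴴ = _
    rw [conjTranspose_mul, hsm]
  -- positivity of sInf (spectrum (A x))
  set δ := sInf (spectrum ℝ (A x)) with hδ
  have hspecA : spectrum ℝ (A x) = Set.range hAh.eigenvalues :=
    hAh.spectrum_real_eq_range_eigenvalues
  have hfinA : (spectrum ℝ (A x)).Finite := Matrix.finite_real_spectrum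
  have hneA : (spectrum ℝ (A x)).Nonempty := by
    rw [hspecA]; exact Set.range_nonempty _
  have hδpos : 0 < δ := by
    have hmem := hneA.csInf_mem hfinA
    rw [hspecA] at hmem
    obtain ⟨i, hi⟩ := hmem
    rw [hδ, hspecA, ← hi]
    exact (hA x).eigenvalues_pos i
  -- nonnegativity of sSup (spectrum (A'x * A'x))
  set K := sSup (spectrum ℝ (A' x * A' x)) with hK
  have hfinaa : (spectrum ℝ (A' x * A' x)).Finite := Matrix.finite_real_spectrum
  have hKnn : 0 ≤ K := by
    have hps : (A' x * A' x).PosSemidef := by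
      have := Matrix.posSemidef_self_mul_conjTranspose (A' x)
      rwa [ham] at this
    obtain ⟨i⟩ := hne
    exact le_trans (hps.eigenvalues_nonneg i)
      (le_csSup hfinaa.bddAbove (haa.eigenvalues_mem_spectrum_real i))
  set L := sSup (spectrum ℝ (S' x * S' x)) with hL
  rcases le_or_gt L 0 with hL0 | hLpos
  · exact le_trans hL0 (div_nonneg hKnn (by positivity))
  -- eigenvector for L
  have hfinmm : (spectrum ℝ (S' x * S' x)).Finite := Matrix.finite_real_spectrum
  have hnemm : (spectrum ℝ (S' x * S' x)).Nonempty := by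
    rw [hmm.spectrum_real_eq_range_eigenvalues]; exact Set.range_nonempty _
  have hLmem : L ∈ spectrum ℝ (S' x * S' x) := hnemm.csSup_mem hfinmm
  obtain ⟨w, hw0, hww⟩ := exists_eigvec_of_mem_spectrum hLmem
  -- produce a unit eigenvector of S' x with eigenvalue t, t^2 = L
  obtain ⟨t, u, ht2, hu1, htu⟩ :
      ∃ (t : ℝ) (u : EuclideanSpace ℝ (Fin n)), t ^ 2 = L ∧ ‖u‖ = 1 ∧
        toEuclideanLin (S' x) u = t • u := by
    set r := Real.sqrt L with hr
    have hr2 : r ^ 2 = L := Real.sq_sqrt hLpos.le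
    set u₁ := toEuclideanLin (S' x) w + r • w with hu₁
    by_cases h1 : u₁ = 0
    · refine ⟨-r, (‖w‖⁻¹ : ℝ) • w, by rw [neg_pow]; simpa using hr2,
        norm_smul_inv_norm hw0, ?_⟩
      have hwe : toEuclideanLin (S' x) w = (-r) • w := by
        have h2 := eq_neg_of_add_eq_zero_left h1
        rw [h2, neg_smul]
      rw [_root_.map_smul, hwe, smul_comm]
    · refine ⟨r, (‖u₁‖⁻¹ : ℝ) • u₁, hr2, norm_smul_inv_norm h1, ?_⟩
      have he : toEuclideanLin (S' x) u₁ = r • u₁ := by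
        have hrr : r * r = L := by nlinarith [hr2]
        rw [hu₁, _root_.map_add, _root_.map_smul, ← toEuclideanLin_mul_apply, hww, smul_add, smul_smul, hrr,
          add_comm]
      rw [_root_.map_smul, he, smul_comm]
  -- sInf spectrum of S x
  set σ := sInf (spectrum ℝ (S x)) with hσ
  have hfins : (spectrum ℝ (S x)).Finite := Matrix.finite_real_spectrum
  have hnes : (spectrum ℝ (S x)).Nonempty := by
    rw [hss.spectrum_real_eq_range_eigenvalues]; exact Set.range_nonempty _
  have hσmem : σ ∈ spectrum ℝ (S x) := hnes.csInf_mem hfins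
  have hσpos : 0 < σ := by
    have hmem := hσmem
    rw [hss.spectrum_real_eq_range_eigenvalues] at hmem
    obtain ⟨i, hi⟩ := hmem
    exact hi ▸ (hS x).eigenvalues_pos i
  have hδσ : δ ≤ σ ^ 2 := by
    obtain ⟨w₂, hw₂0, hw₂⟩ := exists_eigvec_of_mem_spectrum hσmem
    have h2 : toEuclideanLin (A x) w₂ = (σ ^ 2) • w₂ := by
      rw [← hsq x, toEuclideanLin_mul_apply, hw₂, _root_.map_smul, hw₂, smul_smul, ← pow_two]
    exact csInf_le hfinA.bddBelow (mem_spectrum_of_eigvec hw₂0 h2)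
  set c : ℝ := ⟪u, toEuclideanLin (S x) u⟫ with hc
  have hσc : σ ≤ c := sInf_le_rayleigh hss hu1
  -- quadratic form of A' at u
  have hia : ⟪u, toEuclideanLin (A' x) u⟫ = 2 * t * c := by
    rw [ha, _root_.map_add, LinearMap.add_apply, inner_add_right,
      toEuclideanLin_mul_apply, toEuclideanLin_mul_apply, htu, _root_.map_smul]
    have hsymS' := isHermitian_iff_isSymmetric.1 hsm
    rw [← hsymS' u (toEuclideanLin (S x) u), htu, real_inner_smul_left, real_inner_smul_right,
      ← hc]
    ring
  -- Cauchy-Schwarz chain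
  have hCS : (2 * t * c) ^ 2 ≤ K := by
    have h1 := real_inner_mul_inner_self_le u (toEuclideanLin (A' x) u)
    have h2 : ⟪u, u⟫ = 1 := by rw [real_inner_self_eq_norm_sq, hu1]; norm_num
    have h3 : ⟪toEuclideanLin (A' x) u, toEuclideanLin (A' x) u⟫
        = ⟪u, toEuclideanLin (A' x * A' x) u⟫ := by
      rw [toEuclideanLin_mul_apply]
      exact isHermitian_iff_isSymmetric.1 ham u (toEuclideanLin (A' x) u)
    have h4 : ⟪u, toEuclideanLin (A' x * A' x) u⟫ ≤ K := rayleigh_le_sSup haa hu1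
    calc (2 * t * c) ^ 2
        = ⟪u, toEuclideanLin (A' x) u⟫ * ⟪u, toEuclideanLin (A' x) u⟫ := by rw [hia]; ring
      _ ≤ ⟪u, u⟫ * ⟪toEuclideanLin (A' x) u, toEuclideanLin (A' x) u⟫ := h1
      _ = ⟪u, toEuclideanLin (A' x * A' x) u⟫ := by rw [h2, one_mul, h3]
      _ ≤ K := h4
  -- final arithmetic
  rw [le_div_iff₀ (by positivity : (0:ℝ) < 4 * δ)]
  have hcσ : σ ^ 2 ≤ c ^ 2 := by nlinarith
  have h5 : L * (4 * δ) ≤ L * (4 * c ^ 2) := by nlinarith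
  have h6 : L * (4 * c ^ 2) = (2 * t * c) ^ 2 := by rw [← ht2]; ring
  linarith
end

section
/- Let ν = Gamma(α, β) and φ = Gamma(α, β') be gamma distributions with the same shape α > 0 and rates 0 < β < β'. Then the total variation distance between ν and φ is at most (β'/β)^α − 1. -/
open MeasureTheory ProbabilityTheory Real

lemma gamma_density_le (α β β' : ℝ) (hα : 0 < α) (hβ : 0 < β) (hββ' : β < β') (x : ℝ) :
    gammaPDF α β' x ≤ ENNReal.ofReal ((β' / β) ^ α) * gammaPDF α β x := by
  have hβ' : 0 < β' := hβ.trans hββ'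
  rcases lt_or_ge x 0 with hx | hx
  · simp [gammaPDF_of_neg hx]
  · rw [gammaPDF_of_nonneg hx, gammaPDF_of_nonneg hx, ← ENNReal.ofReal_mul (by positivity)]
    apply ENNReal.ofReal_le_ofReal
    have h1 : (β' / β) ^ α * β ^ α = β' ^ α := by
      rw [← Real.mul_rpow (by positivity) hβ.le, div_mul_cancel₀ _ hβ.ne']
    have hΓ : 0 < Real.Gamma α := Real.Gamma_pos_of_pos hα
    have hexp : Real.exp (-(β' * x)) ≤ Real.exp (-(β * x)) := by
      apply Real.exp_le_exp.2
      nlinarith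
    calc β' ^ α / Real.Gamma α * x ^ (α - 1) * Real.exp (-(β' * x))
        ≤ β' ^ α / Real.Gamma α * x ^ (α - 1) * Real.exp (-(β * x)) := by
          apply mul_le_mul_of_nonneg_left hexp (by positivity)
      _ = (β' / β) ^ α * (β ^ α / Real.Gamma α * x ^ (α - 1) * Real.exp (-(β * x))) := by
          rw [← h1]; ring

lemma gamma_measure_le (α β β' : ℝ) (hα : 0 < α) (hβ : 0 < β) (hββ' : β < β')
    (s : Set ℝ) (hs : MeasurableSet s) :
    gammaMeasure α β' s ≤ ENNReal.ofReal ((β' / β) ^ α) * gammaMeasure α β s := by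
  have hm : Measurable (gammaPDF α β) := (measurable_gammaPDFReal α β).ennreal_ofReal
  rw [gammaMeasure, gammaMeasure, withDensity_apply _ hs, withDensity_apply _ hs,
    ← lintegral_const_mul _ hm]
  exact lintegral_mono fun x => gamma_density_le α β β' hα hβ hββ' x

/-- Let `ν = Gamma(α, β)` and `φ = Gamma(α, β')` with the same shape `α > 0` and
rates `0 < β < β'`.  Then the total variation distance between `ν` and `φ`
(the supremum of `|ν(s) − φ(s)|` over measurable sets `s`) is at most
`(β'/β)^α − 1`. -/
theorem stmt_10 (α β β' : ℝ) (hα : 0 < α) (hβ : 0 < β) (hββ' : β < β') :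
    ∀ s : Set ℝ, MeasurableSet s →
      |((gammaMeasure α β) s).toReal - ((gammaMeasure α β') s).toReal| ≤
        (β' / β) ^ α - 1 := by
  have hβ' : 0 < β' := hβ.trans hββ'
  have hν : IsProbabilityMeasure (gammaMeasure α β) := isProbabilityMeasure_gammaMeasure hα hβ
  have hφ : IsProbabilityMeasure (gammaMeasure α β') := isProbabilityMeasure_gammaMeasure hα hβ'
  have hc1 : (1:ℝ) ≤ (β' / β) ^ α := by
    apply Real.one_le_rpow (by rw [le_div_iff₀ hβ]; linarith) hα.le
  -- key real-valued bound
  have key : ∀ s : Set ℝ, MeasurableSet s →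
      ((gammaMeasure α β') s).toReal - ((gammaMeasure α β) s).toReal ≤ (β' / β) ^ α - 1 := by
    intro s hs
    have h := gamma_measure_le α β β' hα hβ hββ' s hs
    have hν1 : gammaMeasure α β s ≤ 1 := prob_le_one
    have hφfin : gammaMeasure α β' s ≠ ⊤ := measure_ne_top _ _
    have hνfin : gammaMeasure α β s ≠ ⊤ := measure_ne_top _ _
    have htr : ((gammaMeasure α β') s).toReal ≤ (β' / β) ^ α * ((gammaMeasure α β) s).toReal := by
      have := ENNReal.toReal_mono (by finiteness) h
      rwa [ENNReal.toReal_mul, ENNReal.toReal_ofReal (by positivity)] at this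
    have hν1' : ((gammaMeasure α β) s).toReal ≤ 1 := by
      simpa using ENNReal.toReal_mono (by simp) hν1
    have hν0 : 0 ≤ ((gammaMeasure α β) s).toReal := ENNReal.toReal_nonneg
    nlinarith
  intro s hs
  rw [abs_sub_le_iff]
  constructor
  · -- ν s - φ s = φ sᶜ - ν sᶜ
    have h1 : ((gammaMeasure α β) s).toReal + ((gammaMeasure α β) sᶜ).toReal = 1 := by
      rw [← ENNReal.toReal_add (measure_ne_top _ _) (measure_ne_top _ _),
        measure_add_measure_compl hs]
      simp
    have h2 : ((gammaMeasure α β') s).toReal + ((gammaMeasure α β') sᶜ).toReal = 1 := by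
      rw [← ENNReal.toReal_add (measure_ne_top _ _) (measure_ne_top _ _),
        measure_add_measure_compl hs]
      simp
    have := key sᶜ hs.compl
    linarith
  · have := key s hs
    linarith
end
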